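/- arXiv:2204.07858 — 5 statements merged into one kernel-verified Lean document; each statement's English description precedes it below -/
import Mathlib

section
/- Let n ≥ 3 be an integer and q ∈ ℂ. For every z ∈ ℂ^n with z_i ≠ 0 for all i and z_1⋯z_n ≠ 1, setting x_1 = z_1⋯z_n − 1, y_1 = z_2, and y_i = z_i z_{i+1} for 2 ≤ i ≤ n−1, one has the identity q(x_1+1)^2/(x_1 · y_1⋯y_{n−1}) + y_1 + ⋯ + y_{n−1} = q z_1^2 z_n/(z_1⋯z_n − 1) + z_2 + Σ_{i=2}^{n−1} z_i z_{i+1}. (In particular x_1 ≠ 0 and all y_i ≠ 0, so both sides are defined.) -/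
/-!
Put `P = z 1 ⋯ z n`, so `x₁ + 1 = P`. Every interior coordinate `z 2, …, z (n-1)` occurs in
exactly two of the monomials `y 1 = z 2`, `y i = z i z (i+1)`, while `z n` occurs once, so
`P² = z 1² · z n · y 1 ⋯ y (n-1)`; cancelling `y 1 ⋯ y (n-1)` turns the first term into
`q z 1² z n / (P - 1)`, and the sums agree term by term.
-/

open Finset

namespace Givental

/-- Givental's coordinates `y i` in terms of the torus coordinates `z`. -/
def mirrorY {M : Type*} [Mul M] (z : ℕ → M) (i : ℕ) : M :=
  if i = 1 then z 2 else z i * z (i + 1)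

lemma mirrorY_of_ne_one {M : Type*} [Mul M] (z : ℕ → M) {i : ℕ} (hi : i ≠ 1) :
    mirrorY z i = z i * z (i + 1) :=
  if_neg hi

lemma mirrorY_ne_zero {M₀ : Type*} [MulZeroClass M₀] [NoZeroDivisors M₀] {z : ℕ → M₀} {m : ℕ}
    (hz : ∀ i ∈ Icc 1 (m + 1), z i ≠ 0) {i : ℕ} (hi : i ∈ Icc 1 m) : mirrorY z i ≠ 0 := by
  rw [mem_Icc] at hi
  by_cases h1 : i = 1
  · rw [mirrorY, if_pos h1]
    exact hz 2 (mem_Icc.2 ⟨by omega, by omega⟩)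
  · rw [mirrorY_of_ne_one z h1]
    exact mul_ne_zero (hz i (mem_Icc.2 ⟨hi.1, by omega⟩))
      (hz (i + 1) (mem_Icc.2 ⟨by omega, by omega⟩))

lemma sq_prod_Icc_eq_mul_prod_mirrorY {M : Type*} [CommMonoid M] (z : ℕ → M) {m : ℕ}
    (hm : 1 ≤ m) :
    (∏ i ∈ Icc 1 (m + 1), z i) ^ 2 = z 1 ^ 2 * z (m + 1) * ∏ i ∈ Icc 1 m, mirrorY z i := by
  induction m, hm using Nat.le_induction with
  | base =>
    simp only [Nat.reduceAdd, Nat.one_le_ofNat, prod_Icc_succ_top, Icc_self, prod_singleton, sq,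
      mirrorY, ↓reduceIte]
    ac_rfl
  | succ m hm ih =>
    rw [prod_Icc_succ_top (b := m + 1) (by omega), mul_pow, ih,
      prod_Icc_succ_top (b := m) (by omega), mirrorY_of_ne_one z (by omega)]
    simp only [sq]
    ac_rfl

lemma sum_Icc_mirrorY {M : Type*} [AddCommMonoid M] [Mul M] (z : ℕ → M) {m : ℕ} (hm : 1 ≤ m) :
    ∑ i ∈ Icc 1 m, mirrorY z i = z 2 + ∑ i ∈ Icc 2 m, z i * z (i + 1) := by
  rw [← insert_Icc_add_one_left_eq_Icc hm, sum_insert (by simp)]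
  refine congrArg₂ (· + ·) (if_pos rfl) (sum_congr rfl fun i hi => ?_)
  exact mirrorY_of_ne_one z (by rw [mem_Icc] at hi; omega)

lemma mul_sq_prod_div_add_sum_mirrorY {K : Type*} [Field K] (q : K) {z : ℕ → K} {m : ℕ}
    (hm : 1 ≤ m) (hy : ∀ i ∈ Icc 1 m, mirrorY z i ≠ 0) :
    q * (∏ i ∈ Icc 1 (m + 1), z i) ^ 2
          / ((∏ i ∈ Icc 1 (m + 1), z i - 1) * ∏ i ∈ Icc 1 m, mirrorY z i)
        + ∑ i ∈ Icc 1 m, mirrorY z i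
      = q * z 1 ^ 2 * z (m + 1) / (∏ i ∈ Icc 1 (m + 1), z i - 1)
        + z 2 + ∑ i ∈ Icc 2 m, z i * z (i + 1) := by
  rw [sq_prod_Icc_eq_mul_prod_mirrorY z hm, sum_Icc_mirrorY z hm, ← add_assoc, ← mul_assoc,
    mul_div_mul_right _ _ (prod_ne_zero_iff.2 hy), ← mul_assoc]

end Givental

open Givental

/-- **Coordinate-change identity for Givental's mirror LG potential of the quadric.**
For `n ≥ 3`, `q ∈ ℂ`, and `z ∈ ℂⁿ` (indexed `z 1, …, z n`) with all `z i ≠ 0` and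
`z 1 ⋯ z n ≠ 1`, setting `x₁ = z 1 ⋯ z n − 1`, `y 1 = z 2`, and `y i = z i * z (i+1)` for
`2 ≤ i ≤ n − 1`, one has `x₁ ≠ 0`, all `y i ≠ 0`, and
`q (x₁+1)² / (x₁ ⬝ y 1 ⋯ y (n−1)) + y 1 + ⋯ + y (n−1)
  = q z₁² z_n / (z 1 ⋯ z n − 1) + z 2 + ∑_{i=2}^{n−1} z i z (i+1)`. -/
theorem givental_mirror_coordinate_change (n : ℕ) (hn : 3 ≤ n) (q : ℂ) (z : ℕ → ℂ)
    (hz : ∀ i ∈ Finset.Icc 1 n, z i ≠ 0)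
    (hprod : (∏ i ∈ Finset.Icc 1 n, z i) ≠ 1) :
    let x₁ : ℂ := (∏ i ∈ Finset.Icc 1 n, z i) - 1
    let y : ℕ → ℂ := fun i => if i = 1 then z 2 else z i * z (i + 1)
    x₁ ≠ 0 ∧ (∀ i ∈ Finset.Icc 1 (n - 1), y i ≠ 0) ∧
      q * (x₁ + 1) ^ 2 / (x₁ * ∏ i ∈ Finset.Icc 1 (n - 1), y i)
          + ∑ i ∈ Finset.Icc 1 (n - 1), y i
        = q * (z 1) ^ 2 * z n / ((∏ i ∈ Finset.Icc 1 n, z i) - 1)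
          + z 2 + ∑ i ∈ Finset.Icc 2 (n - 1), z i * z (i + 1) := by
  obtain ⟨m, rfl⟩ : ∃ m, n = m + 1 := ⟨n - 1, by omega⟩
  have hm : 1 ≤ m := by omega
  have hy : ∀ i ∈ Icc 1 m, mirrorY z i ≠ 0 := fun i hi => mirrorY_ne_zero hz hi
  rw [Nat.add_sub_cancel]
  exact ⟨sub_ne_zero.2 hprod, hy, by
    rw [sub_add_cancel]; exact mul_sq_prod_div_add_sum_mirrorY q hm hy⟩
end

section
/- Let n ≥ 4 be an even integer and q a nonzero complex number. The set of critical points of W_0 in Z^n is exactly the disjoint union V(I_1) ∪ V(I_2); that is, z ∈ Z^n satisfies ∂W_0/∂z_j(z) = 0 for all 1 ≤ j ≤ n if and only if z ∈ V(I_1) or z ∈ V(I_2), and V(I_1) ∩ V(I_2) = ∅. -/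
open Finset

/-- One-based access to the coordinates of a point `z ∈ ℂⁿ`: `zc n z j = z_j` for
`1 ≤ j ≤ n` (and `0` for out-of-range indices, which are never used). -/
noncomputable def zc (n : ℕ) (z : Fin n → ℂ) (j : ℕ) : ℂ :=
  if h : 1 ≤ j ∧ j ≤ n then z ⟨j - 1, by omega⟩ else 0

/-- The mirror Landau–Ginzburg potential of the quadric `Qⁿ`:
`W₀(z) = q z₁² z_n/(z₁⋯z_n − 1) + z₂ + ∑_{i=2}^{n−1} z_i z_{i+1}`,
defined on `Zⁿ = {z ∈ ℂⁿ : z₁⋯z_n ≠ 1}`. -/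
noncomputable def W0 (n : ℕ) (q : ℂ) (z : Fin n → ℂ) : ℂ :=
  q * (zc n z 1) ^ 2 * zc n z n / ((∏ j, z j) - 1)
    + zc n z 2 + ∑ i ∈ Finset.Icc 2 (n - 1), zc n z i * zc n z (i + 1)

/-- `z` is a critical point of `W₀` in `Zⁿ`: `z₁⋯z_n ≠ 1` and all `n` partial derivatives
`∂W₀/∂z_j` vanish at `z`. -/
def IsCritPt (n : ℕ) (q : ℂ) (z : Fin n → ℂ) : Prop :=
  (∏ j, z j) ≠ 1 ∧
    ∀ j : Fin n, deriv (fun t => W0 n q (Function.update z j t)) (z j) = 0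

/-- Membership in `V(I₁)`: `z_{2i+1} = 1` for `1 ≤ i ≤ n/2−1`, `z_{2i} = z_n` for
`1 ≤ i ≤ n/2`, `q z₁² = 1`, and `z₁ z_n^{n/2} = 2`. -/
def MemV1 (n : ℕ) (q : ℂ) (z : Fin n → ℂ) : Prop :=
  (∀ i : ℕ, 1 ≤ i → i ≤ n / 2 - 1 → zc n z (2 * i + 1) = 1) ∧
    (∀ i : ℕ, 1 ≤ i → i ≤ n / 2 → zc n z (2 * i) = zc n z n) ∧
    q * (zc n z 1) ^ 2 = 1 ∧ zc n z 1 * (zc n z n) ^ (n / 2) = 2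

/-- Membership in `V(I₂)`: `z_{2i+1} = (−1)^i` for `1 ≤ i ≤ n/2−1`, `z_{2i} = 0` for
`1 ≤ i ≤ n/2`, and `q z₁² = (−1)^{(n−2)/2}`. -/
def MemV2 (n : ℕ) (q : ℂ) (z : Fin n → ℂ) : Prop :=
  (∀ i : ℕ, 1 ≤ i → i ≤ n / 2 - 1 → zc n z (2 * i + 1) = (-1 : ℂ) ^ i) ∧
    (∀ i : ℕ, 1 ≤ i → i ≤ n / 2 → zc n z (2 * i) = 0) ∧
    q * (zc n z 1) ^ 2 = (-1 : ℂ) ^ ((n - 2) / 2)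

/-!
Write `A = q z₁² z_n` and `P = z₁⋯z_n`. Multiplying `∂W₀/∂z₁ = 0` by `z₁` gives `A (P - 2) = 0`.

If `A = 0`, the fractional term of `W₀` only survives in `∂W₀/∂z_n`, and the other equations are
the recurrence `z_{k+1} + z_{k-1} = 0` started at `z₃ = -1`. Hence `z_{n-1} = ±1`, which forces
`q z₁² ≠ 0`, so `z_n = 0` and `P = 0`; the even coordinates then vanish by descending from `z_n`,
and `∂W₀/∂z_n = 0` fixes `q z₁²`. This is `V(I₂)`.

If `P = 2`, every coordinate is nonzero and the equations `z_k ∂W₀/∂z_k = 0` read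
`z_k z_{k+1} + z_{k-1} z_k = 2A` with `z_{n-1} z_n = A`. Descending from `k = n - 1`, all products
`z_k z_{k+1}` equal `A`, so `z₂ = A` and the coordinates alternate between `A` and `1`. This is
`V(I₁)`, on which `z_n ≠ 0`, whereas `z_n = 0` on `V(I₂)`.
-/

open Function

section Coordinates

variable {n : ℕ} (z : Fin n → ℂ)

lemma zc_of_le {k : ℕ} (h1 : 1 ≤ k) (h2 : k ≤ n) : zc n z k = z ⟨k - 1, by omega⟩ :=
  dif_pos ⟨h1, h2⟩

lemma zc_succ (j : Fin n) : zc n z (j + 1) = z j :=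
  zc_of_le z (by omega) j.2

lemma zc_update (j : Fin n) (t : ℂ) : zc n (update z j t) = update (zc n z) (j + 1) t := by
  funext i
  by_cases h : 1 ≤ i ∧ i ≤ n
  · rw [zc_of_le _ h.1 h.2, update_apply, update_apply, zc_of_le _ h.1 h.2]
    simp only [Fin.ext_iff]
    congr 1
    exact propext (by omega)
  · rw [zc, dif_neg h, update_of_ne (by omega), zc, dif_neg h]

lemma prod_eq_prod_zc : ∏ j, z j = ∏ k ∈ range n, zc n z (k + 1) := by
  simp [← Fin.prod_univ_eq_prod_range, zc_succ]

lemma zc_mul_prod_erase (j : Fin n) : zc n z (j + 1) * ∏ l ∈ univ.erase j, z l = ∏ l, z l := by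
  rw [zc_succ, mul_prod_erase _ _ (mem_univ j)]

lemma zc_ne_zero_of_prod_ne_zero (h : ∏ j, z j ≠ 0) {k : ℕ} (h1 : 1 ≤ k) (h2 : k ≤ n) :
    zc n z k ≠ 0 := by
  rw [zc_of_le z h1 h2]
  exact prod_ne_zero_iff.1 h _ (mem_univ _)

lemma prod_eq_zero_of_zc_eq_zero {k : ℕ} (h1 : 1 ≤ k) (h2 : k ≤ n) (h : zc n z k = 0) :
    ∏ j, z j = 0 :=
  prod_eq_zero (mem_univ _) ((zc_of_le z h1 h2).symm.trans h)

end Coordinates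

lemma hasDerivAt_update_apply {𝕜 α : Type*} [NontriviallyNormedField 𝕜] [DecidableEq α]
    (x : α → 𝕜) (k i : α) :
    HasDerivAt (fun t => update x k t i) (if i = k then 1 else 0) (x k) := by
  by_cases h : i = k
  · subst h; simpa using hasDerivAt_id' (x i)
  · simpa [h] using hasDerivAt_const (x k) (x i)

section Derivatives

variable (n : ℕ) (q : ℂ) (x : ℕ → ℂ)

/-- The partial derivative in `z_k` of the quadratic part `z₂ + ∑_{i=2}^{n-1} z_i z_{i+1}`. -/
def linDeriv (k : ℕ) : ℂ :=
  (if k = 2 then 1 else 0) + (if k ∈ Icc 2 (n - 1) then x (k + 1) else 0)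
    + (if k - 1 ∈ Icc 2 (n - 1) then x (k - 1) else 0)

lemma hasDerivAt_quadPart (k : ℕ) :
    HasDerivAt
      (fun t => update x k t 2 + ∑ i ∈ Icc 2 (n - 1), update x k t i * update x k t (i + 1))
      (linDeriv n x k) (x k) := by
  have hsum := HasDerivAt.fun_sum (u := Icc 2 (n - 1)) fun i _ =>
    (hasDerivAt_update_apply x k i).fun_mul (hasDerivAt_update_apply x k (i + 1))
  refine ((hasDerivAt_update_apply x k 2).fun_add hsum).congr_deriv ?_
  have hshift : ∀ i ∈ Icc 2 (n - 1),
      (if i + 1 = k then x i else 0) = if i = k - 1 then x (k - 1) else 0 := by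
    intro i hi
    rw [mem_Icc] at hi
    split_ifs <;> first | omega | rfl | congr 1
  simp only [update_eq_self, ite_mul, one_mul, zero_mul, mul_ite, mul_one, mul_zero,
    sum_add_distrib, sum_congr rfl hshift, sum_ite_eq', linDeriv, eq_comm (a := 2), add_assoc]

lemma linDeriv_one : linDeriv n x 1 = 0 := by
  simp [linDeriv]

lemma linDeriv_two (hn : 3 ≤ n) : linDeriv n x 2 = 1 + x 3 := by
  simp only [linDeriv, mem_Icc]
  split_ifs <;> first | omega | ring

lemma linDeriv_of_lt {k : ℕ} (hk : 3 ≤ k) (hkn : k < n) :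
    linDeriv n x k = x (k + 1) + x (k - 1) := by
  simp only [linDeriv, mem_Icc]
  split_ifs <;> first | omega | ring

lemma linDeriv_self (hn : 3 ≤ n) : linDeriv n x n = x (n - 1) := by
  simp only [linDeriv, mem_Icc]
  split_ifs <;> first | omega | ring

/-- `∂W₀/∂z_k` in the coordinates `x = zc n z`, where `P = ∏ z_l` and `Q = ∏_{l ≠ k} z_l`. -/
noncomputable def partialW0 (P Q : ℂ) (k : ℕ) : ℂ :=
  q * ((if k = 1 then 2 * x 1 * x n else 0) + (if k = n then x 1 ^ 2 else 0)) / (P - 1)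
    - q * x 1 ^ 2 * x n * Q / (P - 1) ^ 2 + linDeriv n x k

lemma hasDerivAt_fracPart {Q : ℂ} (k : ℕ) (hD : x k * Q ≠ 1) :
    HasDerivAt (fun t => q * update x k t 1 ^ 2 * update x k t n / (t * Q - 1))
      (q * ((if k = 1 then 2 * x 1 * x n else 0) + (if k = n then x 1 ^ 2 else 0)) / (x k * Q - 1)
        - q * x 1 ^ 2 * x n * Q / (x k * Q - 1) ^ 2) (x k) := by
  have hnum := (((hasDerivAt_update_apply x k 1).fun_pow 2).const_mul q).fun_mul
    (hasDerivAt_update_apply x k n)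
  have hden := ((hasDerivAt_id' (x k)).mul_const Q).sub_const 1
  refine (hnum.fun_div hden (sub_ne_zero.2 hD)).congr_deriv ?_
  have hD' : x k * Q - 1 ≠ 0 := sub_ne_zero.2 hD
  simp only [update_eq_self, eq_comm (a := 1), eq_comm (a := n)]
  split_ifs <;> subst_vars <;> field_simp <;> ring

/-- `z_k ∂W₀/∂z_k` no longer involves `∏_{l ≠ k} z_l`. -/
lemma mul_partialW0 {P Q : ℂ} {k : ℕ} (hQ : x k * Q = P) :
    x k * partialW0 n q x P Q k =
      q * x 1 ^ 2 * x n * ((if k = 1 then 2 else 0) + (if k = n then 1 else 0)) / (P - 1)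
        - q * x 1 ^ 2 * x n * P / (P - 1) ^ 2 + x k * linDeriv n x k := by
  rw [partialW0, ← hQ]
  split_ifs <;> subst_vars <;> ring

end Derivatives

lemma hasDerivAt_W0_update {n : ℕ} (q : ℂ) {z : Fin n → ℂ} (hz : ∏ l, z l ≠ 1) (j : Fin n) :
    HasDerivAt (fun t => W0 n q (update z j t))
      (partialW0 n q (zc n z) (∏ l, z l) (∏ l ∈ univ.erase j, z l) (j + 1)) (z j) := by
  have hfun : (fun t => W0 n q (update z j t)) = fun t =>
      q * update (zc n z) (j + 1) t 1 ^ 2 * update (zc n z) (j + 1) t n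
          / (t * ∏ l ∈ univ.erase j, z l - 1)
        + (update (zc n z) (j + 1) t 2 + ∑ i ∈ Icc 2 (n - 1),
          update (zc n z) (j + 1) t i * update (zc n z) (j + 1) t (i + 1)) := by
    funext t
    rw [W0, zc_update, prod_update_of_mem (mem_univ j), sdiff_singleton_eq_erase, add_assoc]
  have hP := zc_mul_prod_erase z j
  rw [hfun, ← zc_succ z j]
  refine ((hasDerivAt_fracPart n q _ _ (hP ▸ hz)).add (hasDerivAt_quadPart n _ _)).congr_deriv ?_
  rw [partialW0, hP]

lemma forall_odd_even_iff {α : Type*} {m : ℕ} {x u v : ℕ → α} :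
    ((∀ i, 1 ≤ i → i ≤ m - 1 → x (2 * i + 1) = u i) ∧ (∀ i, 1 ≤ i → i ≤ m → x (2 * i) = v i)) ↔
      ∀ k, 2 ≤ k → k ≤ 2 * m → x k = if Even k then v (k / 2) else u (k / 2) := by
  constructor
  · rintro ⟨hodd, heven⟩ k hk2 hk
    obtain ⟨i, rfl | rfl⟩ := Nat.even_or_odd' k
    · simpa using heven i (by omega) (by omega)
    · simpa [Nat.even_add_one, show (2 * i + 1) / 2 = i by omega] using hodd i (by omega) (by omega)
  · intro h
    refine ⟨fun i h1 h2 => ?_, fun i h1 h2 => ?_⟩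
    · simpa [Nat.even_add_one, show (2 * i + 1) / 2 = i by omega]
        using h (2 * i + 1) (by omega) (by omega)
    · simpa using h (2 * i) (by omega) (by omega)

section Recurrences

variable {m : ℕ} {x : ℕ → ℂ}

/-- The equations `z_k ∂W₀/∂z_k = 0`, `2 ≤ k ≤ n`, on the hypersurface `z₁⋯z_n = 2`,
where `a = q z₁² z_n`. -/
def LogCritEqs (n : ℕ) (x : ℕ → ℂ) (a : ℂ) : Prop :=
  x 2 * (1 + x 3) = 2 * a ∧ (∀ k, 3 ≤ k → k < n → x k * (x (k + 1) + x (k - 1)) = 2 * a) ∧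
    x n * x (n - 1) = a

lemma logCritEqs_iff (hm : 2 ≤ m) {a : ℂ} (ha : a ≠ 0) :
    LogCritEqs (2 * m) x a ↔ ∀ k, 2 ≤ k → k ≤ 2 * m → x k = if Even k then a else 1 := by
  constructor
  · rintro ⟨h2, hmid, htop⟩
    have hpair : ∀ k, 2 ≤ k → k ≤ 2 * m - 1 → x k * x (k + 1) = a := by
      intro k hk2 hk
      induction hk using Nat.decreasingInduction with
      | self => rw [show 2 * m - 1 + 1 = 2 * m by omega, mul_comm]; exact htop
      | of_succ k hk ih =>
        have h := hmid (k + 1) (by omega) (by omega)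
        rw [Nat.add_sub_cancel] at h
        linear_combination h - ih (by omega)
    have hx2 : x 2 = a := by linear_combination h2 - hpair 2 le_rfl (by omega)
    intro k hk2 hk
    induction k, hk2 using Nat.le_induction with
    | base => simp [hx2]
    | succ k hk2 ih =>
      have hp := hpair k hk2 (by omega)
      rw [ih (by omega)] at hp
      rw [if_congr Nat.even_add_one rfl rfl]
      split_ifs at hp ⊢
      · exact mul_left_cancel₀ ha (hp.trans (mul_one a).symm)
      · linear_combination hp
  · intro h
    have hsub : ∀ k, 1 ≤ k → (Even (k - 1) ↔ ¬Even k) := fun k hk => by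
      rw [Nat.even_sub hk]; simp
    refine ⟨?_, fun k hk3 hk => ?_, ?_⟩
    · rw [h 2 le_rfl (by omega), h 3 (by omega) (by omega)]
      simp only [even_two, Nat.even_add_one, not_true_eq_false, if_true, if_false]
      ring
    · rw [h k (by omega) (by omega), h (k + 1) (by omega) (by omega),
        h (k - 1) (by omega) (by omega)]
      by_cases he : Even k <;>
        simp only [he, hsub k (by omega), Nat.even_add_one, not_true_eq_false, not_false_eq_true,
          if_true, if_false] <;> ring
    · rw [h (2 * m) (by omega) le_rfl, h (2 * m - 1) (by omega) (by omega)]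
      simp [hsub (2 * m) (by omega)]

lemma prod_range_eq_of_coords {a : ℂ} (hm : 1 ≤ m)
    (h : ∀ k, 2 ≤ k → k ≤ 2 * m → x k = if Even k then a else 1) :
    ∏ k ∈ range (2 * m), x (k + 1) = x 1 * a ^ m := by
  induction m, hm using Nat.le_induction with
  | base => simp [prod_range_succ, h 2 le_rfl le_rfl]
  | succ j hj ih =>
    rw [show 2 * (j + 1) = 2 * j + 1 + 1 by ring, prod_range_succ, prod_range_succ,
      ih fun k h1 h2 => h k h1 (by omega), h (2 * j + 1 + 1) (by omega) (by omega),
      h (2 * j + 1) (by omega) (by omega)]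
    simp only [Nat.even_add_one, even_two_mul, not_true_eq_false, not_false_eq_true, if_true,
      if_false]
    ring

/-- The equations `∂/∂z_k (z₂ + ∑ z_i z_{i+1}) = 0` for `2 ≤ k < n`. -/
def LinCritEqs (n : ℕ) (x : ℕ → ℂ) : Prop :=
  1 + x 3 = 0 ∧ ∀ k, 3 ≤ k → k < n → x (k + 1) + x (k - 1) = 0

lemma LinCritEqs.odd_coord (h : LinCritEqs (2 * m) x) :
    ∀ i, 1 ≤ i → i ≤ m - 1 → x (2 * i + 1) = (-1) ^ i := by
  intro i hi
  induction i, hi using Nat.le_induction with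
  | base => intro _; linear_combination h.1
  | succ i hi ih =>
    intro hle
    have hstep := h.2 (2 * i + 2) (by omega) (by omega)
    rw [show 2 * i + 2 - 1 = 2 * i + 1 by omega] at hstep
    rw [pow_succ, ← ih (by omega)]
    linear_combination hstep

lemma LinCritEqs.even_coord (h : LinCritEqs (2 * m) x) (htop : x (2 * m) = 0) :
    ∀ i, 1 ≤ i → i ≤ m → x (2 * i) = 0 := by
  intro i hi1 hi
  induction hi using Nat.decreasingInduction with
  | self => exact htop
  | of_succ i hi ih =>
    have hstep := h.2 (2 * i + 1) (by omega) (by omega)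
    rw [Nat.add_sub_cancel, show 2 * i + 1 + 1 = 2 * (i + 1) by ring, ih (by omega)] at hstep
    linear_combination hstep

lemma linCritEqs_of_coords (hm : 2 ≤ m)
    (hodd : ∀ i, 1 ≤ i → i ≤ m - 1 → x (2 * i + 1) = (-1) ^ i)
    (heven : ∀ i, 1 ≤ i → i ≤ m → x (2 * i) = 0) : LinCritEqs (2 * m) x := by
  refine ⟨by linear_combination hodd 1 le_rfl (by omega), fun k hk3 hk => ?_⟩
  obtain ⟨i, rfl | rfl⟩ := Nat.even_or_odd' k
  · obtain ⟨j, rfl⟩ : ∃ j, i = j + 1 := ⟨i - 1, by omega⟩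
    rw [show 2 * (j + 1) - 1 = 2 * j + 1 by omega, hodd (j + 1) (by omega) (by omega),
      hodd j (by omega) (by omega), pow_succ]
    ring
  · rw [Nat.add_sub_cancel, show 2 * i + 1 + 1 = 2 * (i + 1) by ring,
      heven (i + 1) (by omega) (by omega), heven i (by omega) (by omega), add_zero]

end Recurrences

lemma forall_fin_iff_cases (hn : 3 ≤ n) {p : ℕ → Prop} :
    (∀ j : Fin n, p (j + 1)) ↔ p 1 ∧ p 2 ∧ (∀ k, 3 ≤ k → k < n → p k) ∧ p n := by
  constructor
  · intro h
    refine ⟨h ⟨0, by omega⟩, h ⟨1, by omega⟩, fun k hk3 hk => ?_, ?_⟩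
    · simpa [show k - 1 + 1 = k by omega] using h ⟨k - 1, by omega⟩
    · simpa [show n - 1 + 1 = n by omega] using h ⟨n - 1, by omega⟩
  · rintro ⟨h1, h2, hmid, hlast⟩ ⟨j, hj⟩
    show p (j + 1)
    rcases (by omega : j = 0 ∨ j = 1 ∨ (2 ≤ j ∧ j + 1 < n) ∨ j + 1 = n) with rfl | rfl | hj' | hj'
    · exact h1
    · exact h2
    · exact hmid _ (by omega) hj'.2
    · simpa [hj'] using hlast

section CriticalPoints

variable {n : ℕ} {q : ℂ} {z : Fin n → ℂ}

lemma deriv_W0_update (hz : ∏ l, z l ≠ 1) (j : Fin n) :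
    deriv (fun t => W0 n q (update z j t)) (z j) =
      partialW0 n q (zc n z) (∏ l, z l) (∏ l ∈ univ.erase j, z l) (j + 1) :=
  (hasDerivAt_W0_update q hz j).deriv

lemma prod_eq_two_of_critical (hn : 2 ≤ n) (hz : ∏ l, z l ≠ 1)
    (hcrit : ∀ j : Fin n, deriv (fun t => W0 n q (update z j t)) (z j) = 0)
    (hA : q * zc n z 1 ^ 2 * zc n z n ≠ 0) : ∏ l, z l = 2 := by
  have h := mul_partialW0 n q _ (zc_mul_prod_erase z ⟨0, by omega⟩)
  rw [← deriv_W0_update hz, hcrit, mul_zero] at h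
  simp only [zero_add, linDeriv_one, if_true, if_neg (show (1 : ℕ) ≠ n by omega), add_zero,
    mul_zero] at h
  have hD : ∏ l, z l - 1 ≠ 0 := sub_ne_zero.2 hz
  field_simp at h
  have h2 : q * zc n z 1 ^ 2 * zc n z n * (∏ l, z l - 2) = 0 := by linear_combination -h
  exact sub_eq_zero.1 ((mul_eq_zero.1 h2).resolve_left hA)

lemma critical_iff_of_prod_eq_two (hn : 4 ≤ n) (hP : ∏ l, z l = 2) :
    (∀ j : Fin n, deriv (fun t => W0 n q (update z j t)) (z j) = 0) ↔
      LogCritEqs n (zc n z) (q * zc n z 1 ^ 2 * zc n z n) := by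
  have hz : ∏ l, z l ≠ 1 := by rw [hP]; norm_num
  have hx : ∀ k, 1 ≤ k → k ≤ n → zc n z k ≠ 0 :=
    fun _ => zc_ne_zero_of_prod_ne_zero z (by rw [hP]; norm_num)
  have key : ∀ j : Fin n, deriv (fun t => W0 n q (update z j t)) (z j) = 0 ↔
      zc n z (j + 1) * linDeriv n (zc n z) (j + 1) =
        (2 - ((if j.1 + 1 = 1 then 2 else 0) + (if j.1 + 1 = n then 1 else 0))) *
          (q * zc n z 1 ^ 2 * zc n z n) := by
    intro j
    rw [deriv_W0_update hz, ← mul_right_inj' (hx (j + 1) (by omega) (by omega)), mul_zero,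
      mul_partialW0 n q _ (zc_mul_prod_erase z j), hP]
    constructor <;> intro h <;> linear_combination (norm := ring_nf) h
  simp only [key]
  rw [forall_fin_iff_cases (p := fun k => zc n z k * linDeriv n (zc n z) k =
    (2 - ((if k = 1 then 2 else 0) + (if k = n then 1 else 0))) * (q * zc n z 1 ^ 2 * zc n z n))
    (by omega), LogCritEqs, linDeriv_one, linDeriv_two _ _ (by omega), linDeriv_self _ _ (by omega)]
  simp only [if_true, if_neg (show (2 : ℕ) ≠ 1 by omega), if_neg (show (1 : ℕ) ≠ n by omega),
    if_neg (show (2 : ℕ) ≠ n by omega), if_neg (show n ≠ 1 by omega)]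
  refine (and_iff_right (by ring)).trans (and_congr (by norm_num)
    (and_congr (forall₃_congr fun k hk3 hk => ?_) (by norm_num)))
  rw [linDeriv_of_lt _ _ hk3 hk, if_neg (by omega), if_neg (by omega)]
  norm_num

lemma critical_iff_of_numerator_eq_zero (hn : 4 ≤ n) (hz : ∏ l, z l ≠ 1)
    (hA : q * zc n z 1 ^ 2 * zc n z n = 0) :
    (∀ j : Fin n, deriv (fun t => W0 n q (update z j t)) (z j) = 0) ↔
      LinCritEqs n (zc n z) ∧ q * zc n z 1 ^ 2 + (∏ l, z l - 1) * zc n z (n - 1) = 0 := by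
  have hD : ∏ l, z l - 1 ≠ 0 := sub_ne_zero.2 hz
  have key : ∀ j : Fin n, deriv (fun t => W0 n q (update z j t)) (z j) = 0 ↔
      q * ((if j.1 + 1 = 1 then 2 * zc n z 1 * zc n z n else 0) +
        (if j.1 + 1 = n then zc n z 1 ^ 2 else 0)) +
          (∏ l, z l - 1) * linDeriv n (zc n z) (j + 1) = 0 := by
    intro j
    rw [deriv_W0_update hz, partialW0, hA, zero_mul, zero_div, sub_zero, div_add' _ _ _ hD,
      div_eq_zero_iff, or_iff_left hD, mul_comm (linDeriv _ _ _)]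
  have h1 : q * (2 * zc n z 1 * zc n z n) = 0 := by
    linear_combination (exp := 2) (4 * q * zc n z n) * hA
  simp only [key]
  rw [forall_fin_iff_cases (p := fun k => q * ((if k = 1 then 2 * zc n z 1 * zc n z n else 0) +
      (if k = n then zc n z 1 ^ 2 else 0)) + (∏ l, z l - 1) * linDeriv n (zc n z) k = 0) (by omega),
    LinCritEqs, linDeriv_one, linDeriv_two _ _ (by omega), linDeriv_self _ _ (by omega)]
  simp only [if_true, if_neg (show (2 : ℕ) ≠ 1 by omega), if_neg (show (1 : ℕ) ≠ n by omega),
    if_neg (show (2 : ℕ) ≠ n by omega), if_neg (show n ≠ 1 by omega)]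
  refine (and_iff_right (by simp [h1])).trans (and_assoc.symm.trans (and_congr (and_congr
    (by simp [hD]) (forall₃_congr fun k hk3 hk => ?_)) (by simp)))
  rw [linDeriv_of_lt _ _ hk3 hk, if_neg (by omega), if_neg (by omega)]
  simp [hD]

end CriticalPoints

section Components

variable {m : ℕ} {q : ℂ} {z : Fin (2 * m) → ℂ}

lemma memV1_iff (hm : 2 ≤ m) :
    MemV1 (2 * m) q z ↔ ∏ l, z l = 2 ∧ q * zc _ z 1 ^ 2 * zc _ z (2 * m) ≠ 0 ∧
      LogCritEqs (2 * m) (zc _ z) (q * zc _ z 1 ^ 2 * zc _ z (2 * m)) := by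
  simp only [MemV1, show 2 * m / 2 = m by omega]
  constructor
  · rintro ⟨hodd, heven, hq, hprod⟩
    have hcoord := forall_odd_even_iff.1 ⟨hodd, heven⟩
    have hlast : zc _ z (2 * m) ≠ 0 := by
      rintro h
      rw [h, zero_pow (by omega), mul_zero] at hprod
      norm_num at hprod
    rw [hq, one_mul]
    refine ⟨?_, hlast, (logCritEqs_iff hm hlast).2 hcoord⟩
    rw [prod_eq_prod_zc, prod_range_eq_of_coords (by omega) hcoord, hprod]
  · rintro ⟨hP, hA, hlog⟩
    have hcoord := (logCritEqs_iff hm hA).1 hlog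
    have hlast : zc _ z (2 * m) = q * zc _ z 1 ^ 2 * zc _ z (2 * m) := by
      simpa using hcoord (2 * m) (by omega) le_rfl
    have hq : q * zc _ z 1 ^ 2 = 1 := by
      have h : (q * zc _ z 1 ^ 2 - 1) * zc _ z (2 * m) = 0 := by linear_combination -hlast
      exact sub_eq_zero.1 ((mul_eq_zero.1 h).resolve_right (hlast ▸ hA))
    obtain ⟨hodd, heven⟩ := (forall_odd_even_iff (x := zc _ z) (u := fun _ => 1)
      (v := fun _ => zc _ z (2 * m))).2 fun k h1 h2 => by rw [hcoord k h1 h2, ← hlast]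
    refine ⟨hodd, heven, hq, ?_⟩
    rw [← hP, prod_eq_prod_zc, prod_range_eq_of_coords (by omega) hcoord, ← hlast]

lemma memV2_iff (hm : 2 ≤ m) (hz : ∏ l, z l ≠ 1) :
    MemV2 (2 * m) q z ↔ q * zc _ z 1 ^ 2 * zc _ z (2 * m) = 0 ∧
      LinCritEqs (2 * m) (zc _ z) ∧
        q * zc _ z 1 ^ 2 + (∏ l, z l - 1) * zc _ z (2 * m - 1) = 0 := by
  simp only [MemV2, show 2 * m / 2 = m by omega, show (2 * m - 2) / 2 = m - 1 by omega]
  have hodd_last : ∀ {c : ℂ}, (∀ i, 1 ≤ i → i ≤ m - 1 → zc _ z (2 * i + 1) = c ^ i) →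
      zc _ z (2 * m - 1) = c ^ (m - 1) := fun hodd => by
    simpa [show 2 * (m - 1) + 1 = 2 * m - 1 by omega] using hodd (m - 1) (by omega) le_rfl
  constructor
  · rintro ⟨hodd, heven, hq⟩
    have hlast : zc _ z (2 * m) = 0 := heven m (by omega) le_rfl
    refine ⟨by rw [hlast, mul_zero], linCritEqs_of_coords hm hodd heven, ?_⟩
    rw [prod_eq_zero_of_zc_eq_zero z (by omega) le_rfl hlast, hodd_last hodd, hq]
    ring
  · rintro ⟨hA, hlin, heq⟩
    have hodd := hlin.odd_coord
    rw [hodd_last hodd] at heq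
    have hq : q * zc _ z 1 ^ 2 ≠ 0 := fun h => by
      rw [h, zero_add] at heq
      exact mul_ne_zero (sub_ne_zero.2 hz) (pow_ne_zero _ (by norm_num)) heq
    have hlast : zc _ z (2 * m) = 0 := (mul_eq_zero.1 hA).resolve_left hq
    rw [prod_eq_zero_of_zc_eq_zero z (by omega) le_rfl hlast] at heq
    exact ⟨hodd, hlin.even_coord hlast, by linear_combination heq⟩

end Components

theorem quadric_mirror_critical_locus_general (n : ℕ) (hn : 4 ≤ n) (hev : Even n)
    (q : ℂ) :
    (∀ z : Fin n → ℂ, (∏ j, z j) ≠ 1 →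
      ((∀ j : Fin n, deriv (fun t => W0 n q (Function.update z j t)) (z j) = 0) ↔
        (MemV1 n q z ∨ MemV2 n q z))) ∧
    (∀ z : Fin n → ℂ, (∏ j, z j) ≠ 1 → ¬(MemV1 n q z ∧ MemV2 n q z)) := by
  obtain ⟨m, rfl⟩ := hev.two_dvd
  have hm : 2 ≤ m := by omega
  refine ⟨fun z hz => ⟨fun hcrit => ?_, ?_⟩, fun z hz h => ?_⟩
  · by_cases hA : q * zc _ z 1 ^ 2 * zc _ z (2 * m) = 0
    · exact .inr ((memV2_iff hm hz).2 ⟨hA, (critical_iff_of_numerator_eq_zero hn hz hA).1 hcrit⟩)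
    · have hP := prod_eq_two_of_critical (by omega) hz hcrit hA
      exact .inl ((memV1_iff hm).2 ⟨hP, hA, (critical_iff_of_prod_eq_two hn hP).1 hcrit⟩)
  · rintro (h | h)
    · obtain ⟨hP, -, hlog⟩ := (memV1_iff hm).1 h
      exact (critical_iff_of_prod_eq_two hn hP).2 hlog
    · obtain ⟨hA, hcrit⟩ := (memV2_iff hm hz).1 h
      exact (critical_iff_of_numerator_eq_zero hn hz hA).2 hcrit
  · exact ((memV1_iff hm).1 h.1).2.1 ((memV2_iff hm hz).1 h.2).1

/-- **Critical locus of the mirror LG potential of the quadric** (Proposition, §3).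
For even `n ≥ 4` and `q ≠ 0`: a point `z ∈ Zⁿ` is a critical point of `W₀` if and only if
`z ∈ V(I₁)` or `z ∈ V(I₂)`; moreover `V(I₁) ∩ V(I₂) = ∅`. -/
theorem quadric_mirror_critical_locus (n : ℕ) (hn : 4 ≤ n) (hev : Even n)
    (q : ℂ) (hq : q ≠ 0) :
    (∀ z : Fin n → ℂ, (∏ j, z j) ≠ 1 →
      ((∀ j : Fin n, deriv (fun t => W0 n q (Function.update z j t)) (z j) = 0) ↔
        (MemV1 n q z ∨ MemV2 n q z))) ∧
    (∀ z : Fin n → ℂ, (∏ j, z j) ≠ 1 → ¬(MemV1 n q z ∧ MemV2 n q z)) :=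
  quadric_mirror_critical_locus_general n hn hev q
end

section
/- Let n ≥ 4 be an even integer, q ∈ ℂ, λ a nonzero complex number, and z ∈ ℂ^n with z_1⋯z_n ≠ 1. Define z′ ∈ ℂ^n by z′_1 = λ^{−n/2} z_1, z′_i = λ z_i for even i with 2 ≤ i ≤ n, and z′_i = z_i for odd i with 3 ≤ i ≤ n−1. Then z′_1⋯z′_n = z_1⋯z_n, and W_0(z′, q) = λ · W_0(z, λ^{−n} q), where W_0(z, q) = q z_1^2 z_n/(z_1⋯z_n − 1) + z_2 + Σ_{i=2}^{n−1} z_i z_{i+1}. -/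
open Finset

/-- The mirror LG potential of the quadric `Qⁿ` as a function of `q` and `z ∈ ℂⁿ`
(indexed `z 1, …, z n`):
`W₀(z, q) = q z₁² z_n/(z₁⋯z_n − 1) + z₂ + ∑_{i=2}^{n−1} z_i z_{i+1}`. -/
noncomputable def W0q (n : ℕ) (q : ℂ) (z : ℕ → ℂ) : ℂ :=
  q * (z 1) ^ 2 * z n / ((∏ i ∈ Finset.Icc 1 n, z i) - 1)
    + z 2 + ∑ i ∈ Finset.Icc 2 (n - 1), z i * z (i + 1)

/-!
Multiplying the even coordinates by `λ` multiplies every edge term `z_i z_{i+1}` by `λ` (exactly one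
of `i`, `i + 1` is even) and the product `z₁⋯z_n` by `λ^{n/2}`; dividing `z₁` by `λ^{n/2}` restores
the product. The first term of `W₀` then picks up `λ^{-n} · λ` from `z₁² z_n`, which is absorbed
into `q`.
-/

section ScaleEven

variable {M : Type*} [CommMonoid M]

def scaleEven (c : M) (z : ℕ → M) (i : ℕ) : M :=
  if Even i then c * z i else z i

theorem scaleEven_of_even (c : M) (z : ℕ → M) {i : ℕ} (hi : Even i) :
    scaleEven c z i = c * z i :=
  if_pos hi

theorem scaleEven_of_odd (c : M) (z : ℕ → M) {i : ℕ} (hi : Odd i) :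
    scaleEven c z i = z i :=
  if_neg (Nat.not_even_iff_odd.mpr hi)

theorem scaleEven_mul_scaleEven_succ (c : M) (z : ℕ → M) (i : ℕ) :
    scaleEven c z i * scaleEven c z (i + 1) = c * (z i * z (i + 1)) := by
  rcases Nat.even_or_odd i with hi | hi
  · rw [scaleEven_of_even c z hi, scaleEven_of_odd c z hi.add_one, mul_assoc]
  · rw [scaleEven_of_odd c z hi, scaleEven_of_even c z hi.add_one, mul_left_comm]

theorem prod_Icc_scaleEven (c : M) (z : ℕ → M) (m : ℕ) :
    ∏ i ∈ Icc 1 (2 * m), scaleEven c z i = c ^ m * ∏ i ∈ Icc 1 (2 * m), z i := by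
  induction m with
  | zero => simp
  | succ m ih =>
    have hodd : Odd (2 * m + 1) := odd_two_mul_add_one m
    rw [show 2 * (m + 1) = 2 * m + 1 + 1 by ring,
      prod_Icc_succ_top (by omega), prod_Icc_succ_top (by omega),
      prod_Icc_succ_top (by omega) z, prod_Icc_succ_top (by omega) z, ih,
      scaleEven_of_odd c z hodd, scaleEven_of_even c z hodd.add_one, pow_succ]
    simp only [mul_comm, mul_assoc, mul_left_comm]

end ScaleEven

theorem prod_Icc_update_one_scaleEven {K : Type*} [Field K] {c : K} (hc : c ≠ 0)
    (z : ℕ → K) (m : ℕ) :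
    ∏ i ∈ Icc 1 (2 * m), (if i = 1 then (c ^ m)⁻¹ * z 1 else scaleEven c z i)
      = ∏ i ∈ Icc 1 (2 * m), z i := by
  have hfactor : ∀ i, (if i = 1 then (c ^ m)⁻¹ * z 1 else scaleEven c z i)
      = (if i = 1 then (c ^ m)⁻¹ else 1) * scaleEven c z i := by
    intro i
    split_ifs with h
    · rw [h, scaleEven_of_odd c z odd_one]
    · rw [one_mul]
  simp_rw [hfactor]
  rw [prod_mul_distrib, prod_ite_eq', prod_Icc_scaleEven, ← mul_assoc]
  split_ifs with h1
  · rw [inv_mul_cancel₀ (pow_ne_zero m hc), one_mul]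
  · obtain rfl : m = 0 := by simp at h1; omega
    simp

theorem quadric_mirror_rescaling_general (n : ℕ) (hev : Even n)
    (q lam : ℂ) (hlam : lam ≠ 0) (z : ℕ → ℂ) :
    let z' : ℕ → ℂ := fun i =>
      if i = 1 then (lam ^ (n / 2))⁻¹ * z 1 else if Even i then lam * z i else z i
    (∏ i ∈ Finset.Icc 1 n, z' i) = (∏ i ∈ Finset.Icc 1 n, z i) ∧
    W0q n q z' = lam * W0q n ((lam ^ n)⁻¹ * q) z := by
  intro z'
  obtain ⟨m, rfl⟩ := hev.two_dvd
  have hm : 2 * m / 2 = m := by omega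
  have hprod : ∏ i ∈ Icc 1 (2 * m), z' i = ∏ i ∈ Icc 1 (2 * m), z i := by
    simp only [z', hm]
    exact prod_Icc_update_one_scaleEven hlam z m
  have hz'1 : z' 1 = (lam ^ m)⁻¹ * z 1 := by simp [z', hm]
  have hz'2 : z' 2 = lam * z 2 := by simp [z']
  have hz'n : z' (2 * m) = lam * z (2 * m) := by
    simp [z', show 2 * m ≠ 1 by omega]
  have hsum : ∑ i ∈ Icc 2 (2 * m - 1), z' i * z' (i + 1)
      = lam * ∑ i ∈ Icc 2 (2 * m - 1), z i * z (i + 1) := by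
    rw [mul_sum]
    refine sum_congr rfl fun i hi => ?_
    have hi2 : 2 ≤ i := (mem_Icc.mp hi).1
    have hi1 : i ≠ 1 := by omega
    have hi1' : i + 1 ≠ 1 := by omega
    simp only [z', if_neg hi1, if_neg hi1']
    exact scaleEven_mul_scaleEven_succ lam z i
  refine ⟨hprod, ?_⟩
  rw [W0q, W0q, hprod, hz'1, hz'2, hz'n, hsum, pow_mul']
  field_simp

/-- **Homogeneity of the mirror LG potential under rescaling** (eq. (5.15)).
For even `n ≥ 4`, `λ ≠ 0`, and `z` with `z₁⋯z_n ≠ 1`, define `z′` by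
`z′₁ = λ^{−n/2} z₁`, `z′ᵢ = λ zᵢ` for even `i` with `2 ≤ i ≤ n`, and `z′ᵢ = zᵢ` for odd `i`
with `3 ≤ i ≤ n−1`. Then `z′₁⋯z′_n = z₁⋯z_n` and `W₀(z′, q) = λ · W₀(z, λ^{−n} q)`. -/
theorem quadric_mirror_rescaling (n : ℕ) (hn : 4 ≤ n) (hev : Even n)
    (q lam : ℂ) (hlam : lam ≠ 0) (z : ℕ → ℂ)
    (hz : (∏ i ∈ Finset.Icc 1 n, z i) ≠ 1) :
    let z' : ℕ → ℂ := fun i =>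
      if i = 1 then (lam ^ (n / 2))⁻¹ * z 1 else if Even i then lam * z i else z i
    (∏ i ∈ Finset.Icc 1 n, z' i) = (∏ i ∈ Finset.Icc 1 n, z i) ∧
    W0q n q z' = lam * W0q n ((lam ^ n)⁻¹ * q) z :=
  quadric_mirror_rescaling_general n hev q lam hlam z
end

section
/- Let n ≥ 1 be an integer and let ψ ∈ ℂ[[u]] be the formal power series ψ = Σ_{d ≥ 0} ( (2d)! / ((d!)^{n+2} 4^d) ) u^d. Let D be the operator on ℂ[[u]] given by D f = u·f′. If f_0, f_1, …, f_n ∈ ℂ[u] are polynomials such that Σ_{i=0}^{n} f_i · D^i ψ = 0 in ℂ[[u]], then f_0 = f_1 = ⋯ = f_n = 0. -/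
open Finset PowerSeries

/-- The operator `D f = u · f′` (the variable times the formal derivative) on `ℂ⟦u⟧`. -/
noncomputable def Dop (f : PowerSeries ℂ) : PowerSeries ℂ :=
  PowerSeries.X * f.derivativeFun

/-!
Write `∑ᵢ fᵢ(u) Dⁱ = ∑ⱼ uʲ gⱼ(D)` with `deg gⱼ ≤ n`. As `D uᵈ = d uᵈ`, the relation says
`∑ⱼ gⱼ(m - j) a_{m-j} = 0` for all `m`, where `a_d` are the coefficients of `ψ`, which satisfy
`(d + 1)^{n+1} a_{d+1} = (d + 1/2) a_d`. If `gⱼ = 0` for `j ≥ J`, dividing the relation at `m` by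
`a_{m-J}` and clearing the denominators `(m - t)^{n+1}` gives a polynomial in `m` that vanishes at
all large integers, hence identically. At `x = j₀`, the least index with `g_{j₀} ≠ 0`, every other
term of that polynomial is divisible by `(x - j₀)^{n+1}`, while the cofactor of `g_{j₀}(x - j₀)`
does not vanish there because `1/2` is not an integer. So `(x - j₀)^{n+1}` divides
`g_{j₀}(x - j₀)`, which has degree at most `n`; contradiction.
-/

namespace Polynomial

section OperatorCoeff

variable {R : Type*} [CommSemiring R]

/-- `∑_{i ≤ n} fᵢ(u) Dⁱ = ∑ⱼ uʲ (operatorCoeff f n j)(D)`. -/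
noncomputable def operatorCoeff (f : ℕ → R[X]) (n j : ℕ) : R[X] :=
  ∑ i ∈ range (n + 1), C ((f i).coeff j) * X ^ i

variable {f : ℕ → R[X]} {n : ℕ}

theorem coeff_operatorCoeff {i : ℕ} (hi : i ≤ n) (j : ℕ) :
    (operatorCoeff f n j).coeff i = (f i).coeff j := by
  simp [operatorCoeff, coeff_C_mul, coeff_X_pow, Nat.lt_succ_of_le hi]

theorem eval_operatorCoeff (j : ℕ) (x : R) :
    (operatorCoeff f n j).eval x = ∑ i ∈ range (n + 1), (f i).coeff j * x ^ i := by
  simp [operatorCoeff, eval_finsetSum]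

theorem natDegree_operatorCoeff_lt (j : ℕ) : (operatorCoeff f n j).natDegree < n + 1 :=
  Nat.lt_succ_of_le <| natDegree_sum_le_of_forall_le _ _ fun i hi =>
    (natDegree_C_mul_X_pow_le _ i).trans (Nat.le_of_lt_succ (mem_range.1 hi))

theorem exists_operatorCoeff_eq_zero : ∃ J, ∀ j ≥ J, operatorCoeff f n j = 0 :=
  ⟨(range (n + 1)).sup fun i => (f i).natDegree + 1, fun j hj => sum_eq_zero fun i hi => by
    rw [coeff_eq_zero_of_natDegree_lt ((le_sup (f := fun i => (f i).natDegree + 1) hi).trans hj),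
      C_0, zero_mul]⟩

end OperatorCoeff

section Hypergeometric

variable {K : Type*} [Field K]

noncomputable def clearingWeight (Q : K[X]) (k J j : ℕ) : K[X] :=
  (∏ t ∈ Ico j J, Q.comp (X - C ((t : K) + 1))) * ∏ t ∈ range j, (X - C (t : K)) ^ k

theorem eq_zero_of_pow_dvd_taylor_mul {k : ℕ} {p w : K[X]} {r : K} (hp : p.natDegree < k)
    (hw : w.eval r ≠ 0) (h : (X - C r) ^ k ∣ taylor (-r) p * w) : p = 0 := by
  have hdvd : (X - C r) ^ k ∣ taylor (-r) p :=
    (prime_X_sub_C r).pow_dvd_of_dvd_mul_right _ (by rwa [dvd_iff_isRoot]) h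
  rw [← taylor_eq_zero (-r)]
  refine eq_zero_of_dvd_of_natDegree_lt hdvd ?_
  rwa [natDegree_taylor, natDegree_pow, natDegree_X_sub_C, mul_one]

variable {k : ℕ} {Q : K[X]} {a : ℕ → K}

theorem mul_prod_Ico_pow_eq_mul_prod_Ico_eval
    (hrec : ∀ d : ℕ, ((d : K) + 1) ^ k * a (d + 1) = Q.eval (d : K) * a d)
    {j L m : ℕ} (hjL : j ≤ L) (hLm : L ≤ m) :
    a (m - j) * ∏ t ∈ Ico j L, ((m : K) - t) ^ k =
      a (m - L) * ∏ t ∈ Ico j L, Q.eval ((m : K) - t - 1) := by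
  induction L, hjL using Nat.le_induction with
  | base => simp
  | succ L hjL ih =>
    have hstep := hrec (m - (L + 1))
    rw [show m - (L + 1) + 1 = m - L by omega, Nat.cast_sub hLm, Nat.cast_succ,
      show (m : K) - (L + 1) = m - L - 1 by ring, sub_add_cancel] at hstep
    rw [prod_Ico_succ_top hjL, prod_Ico_succ_top hjL, ← mul_assoc, ih (by omega)]
    linear_combination (∏ t ∈ Ico j L, Q.eval ((m : K) - t - 1)) * hstep

theorem eval_clearingWeight
    (hrec : ∀ d : ℕ, ((d : K) + 1) ^ k * a (d + 1) = Q.eval (d : K) * a d)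
    {j J m : ℕ} (hjJ : j ≤ J) (hJm : J ≤ m) :
    a (m - J) * (clearingWeight Q k J j).eval (m : K) =
      a (m - j) * ∏ t ∈ range J, ((m : K) - t) ^ k := by
  simp only [clearingWeight, eval_mul, eval_prod, eval_comp, eval_pow, eval_sub, eval_X, eval_C]
  rw [← prod_range_mul_prod_Ico _ hjJ]
  simp only [← sub_sub]
  linear_combination
    -(∏ t ∈ range j, ((m : K) - t) ^ k) * mul_prod_Ico_pow_eq_mul_prod_Ico_eval hrec hjJ hJm

theorem pow_dvd_clearingWeight {i j : ℕ} (J : ℕ) (hij : i < j) :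
    (X - C (i : K)) ^ k ∣ clearingWeight Q k J j :=
  (dvd_prod_of_mem _ (mem_range.2 hij)).mul_left _

theorem eval_clearingWeight_ne_zero [CharZero K] (hQ : ∀ t : ℕ, Q.eval (-((t : K) + 1)) ≠ 0)
    (J j : ℕ) : (clearingWeight Q k J j).eval (j : K) ≠ 0 := by
  simp only [clearingWeight, eval_mul, eval_prod, eval_comp, eval_pow, eval_sub, eval_X, eval_C]
  refine mul_ne_zero (prod_ne_zero_iff.2 fun t ht => ?_) (prod_ne_zero_iff.2 fun t ht => ?_)
  · obtain ⟨s, rfl⟩ := Nat.exists_eq_add_of_le (mem_Ico.1 ht).1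
    rw [show (j : K) - (((j + s : ℕ) : K) + 1) = -((s : K) + 1) by push_cast; ring]
    exact hQ s
  · refine pow_ne_zero _ (sub_ne_zero.2 ?_)
    exact_mod_cast (mem_range.1 ht).ne'

variable {g : ℕ → K[X]}

theorem eval_sum_taylor_mul_clearingWeight
    (hrec : ∀ d : ℕ, ((d : K) + 1) ^ k * a (d + 1) = Q.eval (d : K) * a d) (ha : ∀ d, a d ≠ 0)
    {J : ℕ} (hJ : ∀ j ≥ J, g j = 0)
    (hrel : ∀ m, ∑ x ∈ antidiagonal m, (g x.1).eval (x.2 : K) * a x.2 = 0)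
    {m : ℕ} (hJm : J ≤ m) :
    (∑ j ∈ range J, taylor (-(j : K)) (g j) * clearingWeight Q k J j).eval (m : K) = 0 := by
  have hrel' : ∑ j ∈ range J, (g j).eval ((m - j : ℕ) : K) * a (m - j) = 0 := by
    rw [← hrel m, Nat.sum_antidiagonal_eq_sum_range_succ (fun i d => (g i).eval (d : K) * a d)]
    refine sum_subset (range_subset_range.2 (by omega)) fun j _ hj => ?_
    rw [hJ j (by simpa using hj), eval_zero, zero_mul]
  refine (mul_eq_zero.1 ?_).resolve_right (ha (m - J))
  calc (∑ j ∈ range J, taylor (-(j : K)) (g j) * clearingWeight Q k J j).eval (m : K) * a (m - J)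
      = ∑ j ∈ range J,
          (g j).eval ((m - j : ℕ) : K) * (a (m - J) * (clearingWeight Q k J j).eval (m : K)) := by
        rw [eval_finsetSum, sum_mul]
        refine sum_congr rfl fun j hj => ?_
        rw [eval_mul, taylor_eval, Nat.cast_sub (by simp at hj; omega), ← sub_eq_add_neg]
        ring
    _ = (∏ t ∈ range J, ((m : K) - t) ^ k) *
          ∑ j ∈ range J, (g j).eval ((m - j : ℕ) : K) * a (m - j) := by
        rw [mul_sum]
        refine sum_congr rfl fun j hj => ?_
        rw [eval_clearingWeight hrec (by simp at hj; omega) hJm]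
        ring
    _ = 0 := by rw [hrel', mul_zero]

theorem eq_zero_of_sum_antidiagonal_eval_mul_eq_zero [CharZero K]
    (hrec : ∀ d : ℕ, ((d : K) + 1) ^ k * a (d + 1) = Q.eval (d : K) * a d) (ha : ∀ d, a d ≠ 0)
    (hQ : ∀ t : ℕ, Q.eval (-((t : K) + 1)) ≠ 0) (hdeg : ∀ j, (g j).natDegree < k)
    (hfin : ∃ J, ∀ j ≥ J, g j = 0)
    (hrel : ∀ m, ∑ x ∈ antidiagonal m, (g x.1).eval (x.2 : K) * a x.2 = 0) (j : ℕ) :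
    g j = 0 := by
  obtain ⟨J, hJ⟩ := hfin
  set term : ℕ → K[X] := fun j => taylor (-(j : K)) (g j) * clearingWeight Q k J j
  have hsum : ∑ j ∈ range J, term j = 0 := by
    refine eq_zero_of_infinite_isRoot _ (Set.Infinite.mono ?_
      ((Set.Ici_infinite J).image fun x _ y _ h => Nat.cast_injective h))
    rintro _ ⟨m, hm, rfl⟩
    exact eval_sum_taylor_mul_clearingWeight hrec ha hJ hrel hm
  induction j using Nat.strong_induction_on with
  | _ j ih =>
    by_cases hjJ : J ≤ j
    · exact hJ j hjJ
    refine eq_zero_of_pow_dvd_taylor_mul (hdeg j) (eval_clearingWeight_ne_zero (k := k) hQ J j) ?_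
    have hsplit := add_sum_erase (range J) term (mem_range.2 (not_le.1 hjJ))
    rw [hsum, add_eq_zero_iff_eq_neg] at hsplit
    rw [show taylor (-(j : K)) (g j) * clearingWeight Q k J j = term j from rfl, hsplit]
    refine (dvd_sum fun i hi => ?_).neg_right
    rcases lt_or_gt_of_ne (ne_of_mem_erase hi) with hij | hij
    · simp [term, ih i hij]
    · exact (pow_dvd_clearingWeight J hij).mul_left _

end Hypergeometric

end Polynomial

theorem Dop_mk (c : ℕ → ℂ) : Dop (mk c) = mk fun d => (d : ℂ) * c d := by
  ext (_ | d)
  · simp [Dop]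
  · rw [Dop, coeff_succ_X_mul, show (mk c).derivativeFun = derivative ℂ (mk c) from rfl,
      coeff_derivative]
    simp [mul_comm]

theorem Dop_iterate_mk (i : ℕ) (c : ℕ → ℂ) :
    Dop^[i] (mk c) = mk fun d => (d : ℂ) ^ i * c d := by
  induction i generalizing c with
  | zero => simp
  | succ i ih =>
    rw [Function.iterate_succ_apply, Dop_mk, ih]
    ext d
    simp only [coeff_mk, pow_succ]
    ring

theorem coeff_sum_mul_Dop_iterate_mk (f : ℕ → Polynomial ℂ) (n : ℕ) (c : ℕ → ℂ) (m : ℕ) :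
    coeff m (∑ i ∈ range (n + 1), (f i : PowerSeries ℂ) * Dop^[i] (mk c)) =
      ∑ x ∈ antidiagonal m, (Polynomial.operatorCoeff f n x.1).eval (x.2 : ℂ) * c x.2 := by
  simp only [map_sum, coeff_mul, Dop_iterate_mk, coeff_mk, Polynomial.coeff_coe,
    Polynomial.eval_operatorCoeff, sum_mul]
  rw [sum_comm]
  exact sum_congr rfl fun x _ => sum_congr rfl fun i _ => by ring

noncomputable def psiCoeff (n d : ℕ) : ℂ :=
  ((2 * d).factorial : ℂ) / (((d.factorial : ℂ)) ^ (n + 2) * 4 ^ d)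

theorem psiCoeff_ne_zero (n d : ℕ) : psiCoeff n d ≠ 0 := by
  have := d.factorial_ne_zero
  have := (2 * d).factorial_ne_zero
  simp_all [psiCoeff]

theorem psiCoeff_succ (n d : ℕ) :
    ((d : ℂ) + 1) ^ (n + 1) * psiCoeff n (d + 1) =
      (Polynomial.X + Polynomial.C 2⁻¹ : Polynomial ℂ).eval (d : ℂ) * psiCoeff n d := by
  simp only [psiCoeff, Polynomial.eval_add, Polynomial.eval_X, Polynomial.eval_C,
    show 2 * (d + 1) = 2 * d + 1 + 1 by ring, Nat.factorial_succ]
  push_cast [mul_pow]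
  field_simp
  ring

theorem eval_X_add_C_half_ne_zero (t : ℕ) :
    (Polynomial.X + Polynomial.C 2⁻¹ : Polynomial ℂ).eval (-((t : ℂ) + 1)) ≠ 0 := by
  intro h
  have : ((2 * t + 1 : ℕ) : ℂ) = 0 := by
    simp only [Polynomial.eval_add, Polynomial.eval_X, Polynomial.eval_C] at h
    push_cast
    linear_combination -2 * h
  exact Nat.cast_ne_zero.2 (by omega) this

theorem narrow_picard_fuchs_irreducibility_general (n : ℕ)
    (ψ : PowerSeries ℂ)
    (hψ : ψ = PowerSeries.mk fun d =>
      ((2 * d).factorial : ℂ) / (((d.factorial : ℂ)) ^ (n + 2) * 4 ^ d))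
    (f : ℕ → Polynomial ℂ)
    (h : ∑ i ∈ Finset.range (n + 1), (f i : PowerSeries ℂ) * Dop^[i] ψ = 0) :
    ∀ i ≤ n, f i = 0 := by
  have hψ' : ψ = mk (psiCoeff n) := hψ
  have hg := Polynomial.eq_zero_of_sum_antidiagonal_eval_mul_eq_zero (psiCoeff_succ n)
    (psiCoeff_ne_zero n) eval_X_add_C_half_ne_zero Polynomial.natDegree_operatorCoeff_lt
    Polynomial.exists_operatorCoeff_eq_zero fun m => by
      rw [← coeff_sum_mul_Dop_iterate_mk, ← hψ', h, map_zero]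
  intro i hi
  ext j
  rw [← Polynomial.coeff_operatorCoeff hi, hg, Polynomial.coeff_zero, Polynomial.coeff_zero]

/-- **Linear independence of `ψ, Dψ, …, Dⁿψ` over `ℂ(u)`** (Lemma 5.9, after [BBH88]).
Let `n ≥ 1` and let `ψ = ∑_{d ≥ 0} ((2d)! / ((d!)^{n+2} 4^d)) u^d ∈ ℂ⟦u⟧`. If polynomials
`f₀, …, f_n ∈ ℂ[u]` satisfy `∑_{i=0}^{n} fᵢ · Dⁱψ = 0`, then all the `fᵢ` vanish. -/
theorem narrow_picard_fuchs_irreducibility (n : ℕ) (hn : 1 ≤ n)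
    (ψ : PowerSeries ℂ)
    (hψ : ψ = PowerSeries.mk fun d =>
      ((2 * d).factorial : ℂ) / (((d.factorial : ℂ)) ^ (n + 2) * 4 ^ d))
    (f : ℕ → Polynomial ℂ)
    (h : ∑ i ∈ Finset.range (n + 1), (f i : PowerSeries ℂ) * Dop^[i] ψ = 0) :
    ∀ i ≤ n, f i = 0 :=
  narrow_picard_fuchs_irreducibility_general n ψ hψ f h
end

section
/- For all natural numbers n and m: if n ≤ m then 2^m · Σ_{l=0}^{n} (−1)^{n−l} C(n,l) C(2l,m) = 4^n · C(n, m−n) (an identity of integers, where C(a,b) denotes the binomial coefficient, equal to 0 when b > a); and if m < n then Σ_{l=0}^{n} (−1)^{n−l} C(n,l) C(2l,m) = 0. -/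
/-!
Both sides are the coefficient of `X^m` in `((2X + 1)^2 - 1)^n`: expanding the power of the
difference by the binomial theorem gives `2^m` times the alternating sum, while
`(2X + 1)^2 - 1 = 4X(X + 1)` gives `4^n X^n (X + 1)^n`, whose `X^m`-coefficient is
`4^n C(n, m - n)` for `n ≤ m` and `0` for `m < n`.
-/

open Finset Polynomial

section
variable {R : Type*} [CommRing R]

theorem coeff_C_mul_X_add_one_pow (a : R) (k m : ℕ) :
    ((C a * X + 1) ^ k).coeff m = a ^ m * k.choose m := by
  simp only [add_pow, one_pow, mul_one, mul_pow, ← C_pow, finsetSum_coeff, ← Nat.cast_comm,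
    ← C_eq_natCast, coeff_mul_C, coeff_C_mul, coeff_X_pow, mul_ite, mul_one, mul_zero, sum_ite_eq,
    mem_range, Nat.lt_succ_iff]
  split_ifs with hmk
  · ring
  · rw [Nat.choose_eq_zero_of_lt (by omega), Nat.cast_zero, zero_mul]

theorem coeff_pow_sq_C_mul_X_add_one_sub_one (a : R) (n m : ℕ) :
    (((C a * X + 1) ^ 2 - 1) ^ n).coeff m =
      a ^ m * ∑ l ∈ range (n + 1), (-1) ^ (n - l) * (n.choose l : R) * ((2 * l).choose m : R) := by
  rw [sub_eq_add_neg, add_pow, finsetSum_coeff, mul_sum]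
  refine sum_congr rfl fun l _ => ?_
  rw [← pow_mul, ← C_1, ← C_neg, ← C_pow, ← C_eq_natCast, mul_assoc, ← C_mul, coeff_mul_C, C_1,
    coeff_C_mul_X_add_one_pow]
  ring

theorem coeff_X_pow_mul_X_add_one_pow (n m : ℕ) :
    (X ^ n * (X + 1) ^ n : R[X]).coeff m = if n ≤ m then (n.choose (m - n) : R) else 0 := by
  rw [coeff_X_pow_mul', coeff_X_add_one_pow]

theorem sq_C_two_mul_X_add_one_sub_one : (C (2 : R) * X + 1) ^ 2 - 1 = C 4 * (X * (X + 1)) := by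
  rw [map_ofNat C 2, map_ofNat C 4]
  ring

end

/-- **A binomial identity** (used for the coefficients of the broad Picard–Fuchs operator):
for all `n, m ∈ ℕ`, if `n ≤ m` then
`2^m · ∑_{l=0}^{n} (−1)^{n−l} C(n,l) C(2l,m) = 4^n · C(n, m−n)`,
and if `m < n` then `∑_{l=0}^{n} (−1)^{n−l} C(n,l) C(2l,m) = 0`. -/
theorem binomial_identity_broad_PF (n m : ℕ) :
    (n ≤ m →
      2 ^ m * ∑ l ∈ Finset.range (n + 1),
          (-1 : ℤ) ^ (n - l) * (n.choose l : ℤ) * ((2 * l).choose m : ℤ)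
        = 4 ^ n * (n.choose (m - n) : ℤ)) ∧
    (m < n →
      ∑ l ∈ Finset.range (n + 1),
          (-1 : ℤ) ^ (n - l) * (n.choose l : ℤ) * ((2 * l).choose m : ℤ) = 0) := by
  have key : 2 ^ m * ∑ l ∈ range (n + 1),
      (-1 : ℤ) ^ (n - l) * (n.choose l : ℤ) * ((2 * l).choose m : ℤ)
        = if n ≤ m then 4 ^ n * (n.choose (m - n) : ℤ) else 0 := by
    rw [← coeff_pow_sq_C_mul_X_add_one_sub_one, sq_C_two_mul_X_add_one_sub_one, mul_pow, ← C_pow,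
      coeff_C_mul, mul_pow, coeff_X_pow_mul_X_add_one_pow, mul_ite, mul_zero]
  refine ⟨fun hnm => by rw [key, if_pos hnm], fun hmn => ?_⟩
  rw [if_neg (by omega)] at key
  exact (mul_eq_zero.mp key).resolve_left (by positivity)
end
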